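/- Let m ≥ 2 and μ > 0. Choose A ≥ 1 with (4m−5)A ≥ 4μ + 4. Then the function w(t,x) = (A + ln(1+|x|²) + t)^{−μ} on ℝ^{2m} × (0,∞) satisfies (−(1+|x|²)Δ + ∂/∂t) w ≥ 0, where Δ is the Euclidean Laplacian on ℝ^{2m}. -/

import Mathlib

/-
For a radial function `y ↦ g ‖y‖²` on `ℝⁿ` one has `Δ = 2n g'(r) + 4r g''(r)` with `r = ‖x‖²`.
For `g(r) = (A + t + log (1 + r))^(-μ)` and `L = A + log (1 + r) + t` this turns
`(-(1 + r) Δ + ∂ₜ) w` into `μ L^(-μ-2) ((2n - 1) L (1 + r) - 4r (μ + 1 + L)) / (1 + r)`.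
For `n = 2m` the bracket is `(4m - 1) L + r ((4m - 5) L - 4μ - 4)`, which is nonnegative because
`L ≥ A` and `(4m - 5) A ≥ 4μ + 4 > 0`.
-/

open Real

/-- The Euclidean Laplacian of a function on `ℝⁿ`. -/
noncomputable def laplacian {n : ℕ} (f : EuclideanSpace ℝ (Fin n) → ℝ)
    (x : EuclideanSpace ℝ (Fin n)) : ℝ :=
  ∑ i, fderiv ℝ (fun y => fderiv ℝ f y (EuclideanSpace.single i 1)) x
    (EuclideanSpace.single i 1)

section Radial

variable {n : ℕ} {g g' : ℝ → ℝ}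

lemma fderiv_comp_norm_sq_single (hg : ∀ s, 0 ≤ s → HasDerivAt g (g' s) s)
    (y : EuclideanSpace ℝ (Fin n)) (i : Fin n) :
    fderiv ℝ (fun y => g (‖y‖ ^ 2)) y (EuclideanSpace.single i 1) = 2 * g' (‖y‖ ^ 2) * y i := by
  have h : HasFDerivAt (fun y => g (‖y‖ ^ 2)) _ y :=
    (hg _ (sq_nonneg ‖y‖)).comp_hasFDerivAt y (hasStrictFDerivAt_norm_sq y).hasFDerivAt
  rw [h.fderiv]
  simp only [smul_apply, coe_innerSL_apply, EuclideanSpace.inner_single_right,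
    conj_trivial, one_mul, nsmul_eq_mul, Nat.cast_ofNat, smul_eq_mul]
  ring

theorem laplacian_comp_norm_sq {g'' : ℝ} (hg : ∀ s, 0 ≤ s → HasDerivAt g (g' s) s)
    (x : EuclideanSpace ℝ (Fin n)) (hg' : HasDerivAt g' g'' (‖x‖ ^ 2)) :
    laplacian (fun y => g (‖y‖ ^ 2)) x = 2 * n * g' (‖x‖ ^ 2) + 4 * ‖x‖ ^ 2 * g'' := by
  have hterm (i : Fin n) : fderiv ℝ (fun y => 2 * g' (‖y‖ ^ 2) * y i) x
      (EuclideanSpace.single i 1) = 2 * g' (‖x‖ ^ 2) + 4 * g'' * x i ^ 2 := by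
    have hd : HasFDerivAt (fun y => 2 * g' (‖y‖ ^ 2) * y i) _ x :=
      ((hg'.comp_hasFDerivAt x (hasStrictFDerivAt_norm_sq x).hasFDerivAt).const_mul 2).fun_mul
      (EuclideanSpace.proj i : EuclideanSpace ℝ (Fin n) →L[ℝ] ℝ).hasFDerivAt
    rw [hd.fderiv]
    simp only [Function.comp_apply, add_apply, smul_apply,
      PiLp.proj_apply, PiLp.single_eq_same, smul_eq_mul, coe_innerSL_apply,
      EuclideanSpace.inner_single_right, conj_trivial, one_mul, nsmul_eq_mul, Nat.cast_ofNat]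
    ring
  simp only [laplacian, fderiv_comp_norm_sq_single hg, hterm, Finset.sum_add_distrib,
    ← Finset.mul_sum, ← EuclideanSpace.real_norm_sq_eq, Finset.sum_const, Finset.card_univ,
    Fintype.card_fin, nsmul_eq_mul]
  ring

end Radial

section LogProfile

variable {c p s : ℝ}

lemma const_add_log_one_add_pos (hc : 0 < c) (hs : 0 ≤ s) : 0 < c + log (1 + s) := by
  have := log_nonneg (by linarith : (1 : ℝ) ≤ 1 + s)
  linarith

lemma hasDerivAt_const_add_log_one_add_rpow (hs : 1 + s ≠ 0) (hc : c + log (1 + s) ≠ 0) :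
    HasDerivAt (fun u => (c + log (1 + u)) ^ p)
      (p * (c + log (1 + s)) ^ (p - 1) / (1 + s)) s := by
  have h := (((hasDerivAt_id' (x := s)).const_add 1).log hs).const_add c |>.rpow_const (p := p)
    (Or.inl hc)
  refine h.congr_deriv ?_
  ring

lemma hasDerivAt_deriv_const_add_log_one_add_rpow (hs : 1 + s ≠ 0) (hc : c + log (1 + s) ≠ 0) :
    HasDerivAt (fun u => p * (c + log (1 + u)) ^ (p - 1) / (1 + u))
      (p * ((p - 1) * (c + log (1 + s)) ^ (p - 2) - (c + log (1 + s)) ^ (p - 1)) / (1 + s) ^ 2)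
      s := by
  have h := ((hasDerivAt_const_add_log_one_add_rpow (p := p - 1) hs hc).const_mul p).fun_div
    ((hasDerivAt_id' (x := s)).const_add 1) hs
  refine h.congr_deriv ?_
  rw [show p - 1 - 1 = p - 2 by ring]
  field_simp

theorem laplacian_const_add_log_one_add_norm_sq_rpow {n : ℕ} (hc : 0 < c) (p : ℝ)
    (x : EuclideanSpace ℝ (Fin n)) :
    laplacian (fun y => (c + log (1 + ‖y‖ ^ 2)) ^ p) x =
      2 * n * (p * (c + log (1 + ‖x‖ ^ 2)) ^ (p - 1) / (1 + ‖x‖ ^ 2)) +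
        4 * ‖x‖ ^ 2 * (p * ((p - 1) * (c + log (1 + ‖x‖ ^ 2)) ^ (p - 2) -
          (c + log (1 + ‖x‖ ^ 2)) ^ (p - 1)) / (1 + ‖x‖ ^ 2) ^ 2) := by
  have hs : ∀ s : ℝ, 0 ≤ s → 1 + s ≠ 0 := fun s hs => by positivity
  have hcs : ∀ s : ℝ, 0 ≤ s → c + log (1 + s) ≠ 0 := fun s hs =>
    (const_add_log_one_add_pos hc hs).ne'
  exact laplacian_comp_norm_sq
    (fun s hs' => hasDerivAt_const_add_log_one_add_rpow (hs s hs') (hcs s hs')) x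
    (hasDerivAt_deriv_const_add_log_one_add_rpow (hs _ (sq_nonneg _)) (hcs _ (sq_nonneg _)))

end LogProfile

theorem neg_one_add_norm_sq_mul_laplacian_add_deriv_eq {n : ℕ} {A t : ℝ} (hAt : 0 < A + t)
    (μ : ℝ) (x : EuclideanSpace ℝ (Fin n)) :
    -(1 + ‖x‖ ^ 2) * laplacian (fun y => (A + log (1 + ‖y‖ ^ 2) + t) ^ (-μ)) x
        + deriv (fun s => (A + log (1 + ‖x‖ ^ 2) + s) ^ (-μ)) t =
      μ * (A + log (1 + ‖x‖ ^ 2) + t) ^ (-μ - 2) *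
        ((2 * n - 1) * (A + log (1 + ‖x‖ ^ 2) + t) * (1 + ‖x‖ ^ 2) -
          4 * ‖x‖ ^ 2 * (μ + 1 + (A + log (1 + ‖x‖ ^ 2) + t))) / (1 + ‖x‖ ^ 2) := by
  have hw : (fun y : EuclideanSpace ℝ (Fin n) => (A + log (1 + ‖y‖ ^ 2) + t) ^ (-μ)) =
      fun y => (A + t + log (1 + ‖y‖ ^ 2)) ^ (-μ) := by
    simp only [add_right_comm A]
  have hwt : deriv (fun s => (A + log (1 + ‖x‖ ^ 2) + s) ^ (-μ)) t =
      -μ * (A + log (1 + ‖x‖ ^ 2) + t) ^ (-μ - 1) :=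
    (deriv_comp_const_add (fun u => u ^ (-μ)) _ t).trans (deriv_rpow_const _ _)
  have hL : 0 < A + log (1 + ‖x‖ ^ 2) + t := by
    have := const_add_log_one_add_pos hAt (sq_nonneg ‖x‖)
    linarith
  rw [hw, laplacian_const_add_log_one_add_norm_sq_rpow hAt, hwt, add_right_comm A t]
  set r := ‖x‖ ^ 2
  set L := A + log (1 + r) + t
  have hr : 0 < 1 + r := by positivity
  have hpow : L ^ (-μ - 1) = L ^ (-μ - 2) * L := by
    rw [← rpow_add_one hL.ne']
    ring_nf
  rw [hpow]
  field_simp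
  ring

theorem conformal_heat_supersolution_general (m : ℕ) (μ A : ℝ)
    (hμ : 0 < μ) (hA1 : 1 ≤ A) (hA2 : 4 * μ + 4 ≤ (4 * (m : ℝ) - 5) * A) :
    ∀ t > (0:ℝ), ∀ x : EuclideanSpace ℝ (Fin (2 * m)),
      0 ≤ -(1 + ‖x‖ ^ 2) *
            laplacian (fun y => (A + Real.log (1 + ‖y‖ ^ 2) + t) ^ (-μ)) x
          + deriv (fun s => (A + Real.log (1 + ‖x‖ ^ 2) + s) ^ (-μ)) t := by
  intro t ht x
  rw [neg_one_add_norm_sq_mul_laplacian_add_deriv_eq (by linarith) μ x]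
  set r := ‖x‖ ^ 2
  set L := A + log (1 + r) + t
  have hr : 0 ≤ r := by positivity
  have hAL : A ≤ L := by
    have := log_nonneg (by linarith : (1 : ℝ) ≤ 1 + r)
    linarith
  have h4m : 0 < 4 * (m : ℝ) - 5 := pos_of_mul_pos_left (by linarith) (by linarith : 0 ≤ A)
  have hbracket : 0 ≤ (2 * ((2 * m : ℕ) : ℝ) - 1) * L * (1 + r) - 4 * r * (μ + 1 + L) := by
    push_cast
    nlinarith [mul_le_mul_of_nonneg_left hAL h4m.le, mul_nonneg hr (sub_nonneg.2 hA2)]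
  exact div_nonneg (mul_nonneg (mul_nonneg hμ.le (rpow_nonneg (by linarith) _)) hbracket)
    (by positivity)

/-- Let `m ≥ 2`, `μ > 0` and `A ≥ 1` with `(4m−5)A ≥ 4μ+4`. Then
`w(t,x) = (A + ln(1+|x|²) + t)^{−μ}` on `ℝ^{2m} × (0,∞)` is a supersolution:
`(−(1+|x|²)Δ + ∂_t) w ≥ 0`. -/
theorem conformal_heat_supersolution (m : ℕ) (hm : 2 ≤ m) (μ A : ℝ)
    (hμ : 0 < μ) (hA1 : 1 ≤ A) (hA2 : 4 * μ + 4 ≤ (4 * (m : ℝ) - 5) * A) :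
    ∀ t > (0:ℝ), ∀ x : EuclideanSpace ℝ (Fin (2 * m)),
      0 ≤ -(1 + ‖x‖ ^ 2) *
            laplacian (fun y => (A + Real.log (1 + ‖y‖ ^ 2) + t) ^ (-μ)) x
          + deriv (fun s => (A + Real.log (1 + ‖x‖ ^ 2) + s) ^ (-μ)) t :=
  conformal_heat_supersolution_general m μ A hμ hA1 hA2
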